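/- Let (φ, d) ∈ X(0,T) be a solution of the reformulated problem. Then there exists a constant C > 0, independent of T, such that sup_{t∈[0,T]} sup_{x≥0} |φ(x,t)|·U(x−st−d(t))^{−m} ≤ C·N(T) and sup_{t∈[0,T]} sup_{x≥0} |φ_x(x,t)|·U(x−st−d(t))^{−1} ≤ C·N(T). -/

import Mathlib

open MeasureTheory Real Filter Topology Set

noncomputable section

/-- `n`-th partial derivative in the first (space) variable. -/
def dxn (n : ℕ) (φ : ℝ → ℝ → ℝ) (x t : ℝ) : ℝ := iteratedDeriv n (fun y => φ y t) x

/-- partial derivative in the second (time) variable. -/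
def dt1 (φ : ℝ → ℝ → ℝ) (x t : ℝ) : ℝ := deriv (fun τ => φ x τ) t

/-- Japanese bracket `⟨y⟩ = √(1+y²)`. -/
def jb (y : ℝ) : ℝ := Real.sqrt (1 + y ^ 2)

/-- One-sided Japanese bracket `⟨y⟩₊`. -/
def jbp (y : ℝ) : ℝ := if 0 ≤ y then Real.sqrt (1 + y ^ 2) else 1

/-- A viscous shock profile for `u_t + f(u)_x = (u^{m-1} u_x)_x` with speed `s`. -/
def IsShockProfile (m um s : ℝ) (f U : ℝ → ℝ) : Prop :=
  ContDiff ℝ (⊤ : ℕ∞) U ∧ (∀ z, 0 < U z ∧ U z < um) ∧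
  (∀ z, deriv U z = U z ^ (1 - m) * (f (U z) - s * U z)) ∧
  Tendsto U atBot (nhds um) ∧ Tendsto U atTop (nhds 0)

/-- The nonlinearity `F = −[f(U+φₓ) − f(U) − f′(U)·φₓ]`. -/
def Fnl (f : ℝ → ℝ) (u p : ℝ) : ℝ := -(f (u + p) - f u - deriv f u * p)

/-- The nonlinearity `G = (U+φₓ)^m − U^m − m·φₓ·U^{m−1}`. -/
def Gnl (m u p : ℝ) : ℝ := (u + p) ^ m - u ^ m - m * p * u ^ (m - 1)

/-- `(φ, d)` solves the reformulated problem on `[0,T]`. -/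
structure Reformulated (m um s d₀ T : ℝ) (f U : ℝ → ℝ)
    (φ : ℝ → ℝ → ℝ) (d : ℝ → ℝ) : Prop where
  φ_smooth : ContDiff ℝ (⊤ : ℕ∞) (fun p : ℝ × ℝ => φ p.1 p.2)
  d_C1 : ContDiff ℝ 1 d
  d_init : d 0 = d₀
  pde : ∀ x, 0 < x → ∀ t, t ∈ Set.Ioc (0:ℝ) T →
    dt1 φ x t + deriv f (U (x - s * t - d t)) * dxn 1 φ x t
      - deriv (fun y => U (y - s * t - d t) ^ (m - 1) * dxn 1 φ y t) x
      = deriv d t * U (x - s * t - d t)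
        + Fnl f (U (x - s * t - d t)) (dxn 1 φ x t)
        + deriv (fun y => Gnl m (U (y - s * t - d t)) (dxn 1 φ y t)) x / m
  bc : ∀ t, t ∈ Set.Ioc (0:ℝ) T →
    -(deriv d t) * U (-(s * t) - d t) + f um - f (U (-(s * t) - d t))
      - deriv (fun y => U (y - s * t - d t) ^ (m - 1) * dxn 1 φ y t) 0
      = deriv (fun y => Gnl m (U (y - s * t - d t)) (dxn 1 φ y t)) 0 / m
  bdry : ∀ t, φ 0 t = 0
  decay : ∀ t, Tendsto (fun x => φ x t) atTop (nhds 0)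

/-- The quantity inside the supremum defining `N(T)`. -/
def Nfun (m s β d₀ : ℝ) (U : ℝ → ℝ) (φ : ℝ → ℝ → ℝ) (d : ℝ → ℝ) (t : ℝ) : ℝ :=
  (∫ x in Ioi (0:ℝ), U (x - s * t - d t) ^ (1 - 3 * m) * (φ x t) ^ 2) ^ (1/2 : ℝ)
  + (∫ x in Ioi (0:ℝ), U (x - s * t - d t) ^ (-(1 + m)) * (dxn 1 φ x t) ^ 2) ^ (1/2 : ℝ)
  + (∫ x in Ioi (0:ℝ), U (x - s * t - d t) ^ (m - 3) * (dxn 2 φ x t) ^ 2) ^ (1/2 : ℝ)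
  + (∑ j ∈ Finset.range 4, ∫ x in Ioi (0:ℝ),
      jb (x - s * t - d t) ^ (β + (j : ℝ)) * (dxn j φ x t) ^ 2) ^ (1/2 : ℝ)
  + (d₀ + t) ^ ((β + 3) / 2) * |dxn 2 φ 0 t|
  + (∫ τ in Set.Ioc (0:ℝ) t, (d₀ + τ) ^ (β + 3) * (dxn 2 φ 0 τ) ^ 2) ^ (1/2 : ℝ)

/-- `N(T)`, the supremum over `t ∈ [0,T]`. -/
def Nsup (m s β d₀ : ℝ) (U : ℝ → ℝ) (φ : ℝ → ℝ → ℝ) (d : ℝ → ℝ) (T : ℝ) : ℝ :=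
  sSup (Nfun m s β d₀ U φ d '' Icc 0 T)

/-- Membership `(φ, d) ∈ X(0,T)`. -/
def MemX (m s β d₀ T : ℝ) (U : ℝ → ℝ) (φ : ℝ → ℝ → ℝ) (d : ℝ → ℝ) : Prop :=
  BddAbove (Nfun m s β d₀ U φ d '' Icc 0 T) ∧
  (∀ t ∈ Icc (0:ℝ) T,
    IntegrableOn (fun x => U (x - s * t - d t) ^ (1 - 3 * m) * (φ x t) ^ 2) (Ioi 0) ∧
    IntegrableOn (fun x => U (x - s * t - d t) ^ (-(1 + m)) * (dxn 1 φ x t) ^ 2) (Ioi 0) ∧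
    IntegrableOn (fun x => U (x - s * t - d t) ^ (m - 3) * (dxn 2 φ x t) ^ 2) (Ioi 0) ∧
    ∀ j : ℕ, j < 4 → IntegrableOn
      (fun x => jb (x - s * t - d t) ^ (β + (j : ℝ)) * (dxn j φ x t) ^ 2) (Ioi 0)) ∧
  IntegrableOn (fun p : ℝ × ℝ =>
      U (p.1 - s * p.2 - d p.2) ^ (-(2 * m)) * (dxn 1 φ p.1 p.2) ^ 2
      + U (p.1 - s * p.2 - d p.2) ^ (-2 : ℝ) * (dxn 2 φ p.1 p.2) ^ 2
      + U (p.1 - s * p.2 - d p.2) ^ (2 * m - 4) * (dxn 3 φ p.1 p.2) ^ 2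
      + ∑ j ∈ Finset.range 4,
          jb (p.1 - s * p.2 - d p.2) ^ (β + (j : ℝ)) * U (p.1 - s * p.2 - d p.2) ^ (m - 1)
            * (dxn (j + 1) φ p.1 p.2) ^ 2)
    (Ioi 0 ×ˢ Ioc 0 T) ∧
  ∃ M, ∀ t ∈ Icc (0:ℝ) T, |d t - d₀| ≤ M




private lemma auxSqrtAddLe (a b : ℝ) (ha : 0 ≤ a) (hb : 0 ≤ b) :
    Real.sqrt (a + b) ≤ Real.sqrt a + Real.sqrt b := by
  have h1 := Real.sq_sqrt ha
  have h2 := Real.sq_sqrt hb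
  have h3 := Real.sqrt_nonneg a
  have h4 := Real.sqrt_nonneg b
  have h5 : a + b ≤ (Real.sqrt a + Real.sqrt b) ^ 2 := by nlinarith
  calc Real.sqrt (a + b) ≤ Real.sqrt ((Real.sqrt a + Real.sqrt b) ^ 2) :=
        Real.sqrt_le_sqrt h5
    _ = |Real.sqrt a + Real.sqrt b| := Real.sqrt_sq_eq_abs _
    _ = Real.sqrt a + Real.sqrt b := abs_of_nonneg (by positivity)

private lemma auxFreqSmall (h : ℝ → ℝ) (hc : Continuous h)
    (hint : IntegrableOn (fun y => h y ^ 2) (Ioi (0:ℝ))) (ε : ℝ) (hε : 0 < ε) (x : ℝ) :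
    ∃ y, x ≤ y ∧ |h y| ≤ ε := by
  by_contra hcon
  push_neg at hcon
  set R := max x 0 with hR
  have hsub : Ioi R ⊆ Ioi (0:ℝ) := Ioi_subset_Ioi (le_max_right _ _)
  have h1 : IntegrableOn (fun y => h y ^ 2) (Ioi R) := hint.mono_set hsub
  have h2 : IntegrableOn (fun _ : ℝ => ε ^ 2) (Ioi R) := by
    refine Integrable.mono h1 aestronglyMeasurable_const ?_
    filter_upwards [ae_restrict_mem measurableSet_Ioi] with y hy
    have hxy : x ≤ y := le_trans (le_max_left _ _) (le_of_lt hy)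
    have h3 := hcon y hxy
    simp only [Real.norm_eq_abs]
    rw [abs_of_nonneg (by positivity : (0:ℝ) ≤ ε ^ 2), abs_of_nonneg (sq_nonneg _)]
    nlinarith [abs_nonneg (h y), sq_abs (h y)]
  rw [integrableOn_const_iff] at h2
  rcases h2 with h2 | h2
  · exact absurd (enorm_eq_zero.mp h2) (by positivity)
  · rw [Real.volume_Ioi] at h2; exact (lt_irrefl _ h2)

private lemma auxSqLe (h h' G : ℝ → ℝ) (x : ℝ)
    (hd : ∀ y, HasDerivAt h (h' y) y) (hc' : Continuous h')
    (hG : IntegrableOn G (Ioi x)) (hGnn : ∀ y, 0 ≤ G y)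
    (hb : ∀ y, x ≤ y → |2 * h y * h' y| ≤ G y)
    (hs : ∀ ε, 0 < ε → ∃ y, x ≤ y ∧ |h y| ≤ ε) :
    h x ^ 2 ≤ ∫ y in Ioi x, G y := by
  have hch : Continuous h := by
    rw [continuous_iff_continuousAt]; exact fun y => (hd y).continuousAt
  by_contra hcon
  push_neg at hcon
  set ε := h x ^ 2 - ∫ y in Ioi x, G y with hεdef
  have hεpos : 0 < ε := sub_pos.mpr hcon
  obtain ⟨y, hxy, hy⟩ := hs (Real.sqrt (ε / 2)) (Real.sqrt_pos.mpr (by linarith))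
  have hcont2 : Continuous (fun z => 2 * h z * h' z) := (continuous_const.mul hch).mul hc'
  have hder : ∀ z ∈ uIcc x y, HasDerivAt (fun w => h w ^ 2) (2 * h z * h' z) z := by
    intro z _
    have h0 := (hd z).pow 2
    norm_num at h0
    exact h0
  have hftc : ∫ z in x..y, 2 * h z * h' z = h y ^ 2 - h x ^ 2 :=
    intervalIntegral.integral_eq_sub_of_hasDerivAt hder (hcont2.intervalIntegrable x y)
  have habs := intervalIntegral.abs_integral_le_integral_abs
      (μ := volume) (f := fun z => 2 * h z * h' z) hxy
  have hGi : IntervalIntegrable G volume x y :=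
    (intervalIntegrable_iff_integrableOn_Ioc_of_le hxy).mpr (hG.mono_set Ioc_subset_Ioi_self)
  have h2 : (∫ z in x..y, |2 * h z * h' z|) ≤ ∫ z in x..y, G z := by
    refine intervalIntegral.integral_mono_on hxy (hcont2.abs.intervalIntegrable x y) hGi ?_
    exact fun z hz => hb z hz.1
  have h3 : (∫ z in x..y, G z) ≤ ∫ z in Ioi x, G z := by
    rw [intervalIntegral.integral_of_le hxy]
    exact setIntegral_mono_set hG (ae_of_all _ hGnn)
      (HasSubset.Subset.eventuallyLE Ioc_subset_Ioi_self)
  have hy2 : h y ^ 2 ≤ ε / 2 := by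
    have h5 : |h y| ^ 2 ≤ Real.sqrt (ε / 2) ^ 2 := pow_le_pow_left₀ (abs_nonneg _) hy 2
    rw [sq_abs, Real.sq_sqrt (by linarith)] at h5
    exact h5
  have hI : -(∫ z in x..y, 2 * h z * h' z) ≤ |∫ z in x..y, 2 * h z * h' z| := neg_le_abs _
  linarith

private lemma auxMain {V : ℝ → ℝ} (hVpos : ∀ z, 0 < V z) (hVanti : Antitone V)
    (h h' : ℝ → ℝ) (x p q : ℝ) (hx : 0 ≤ x) (hr : p + q ≤ 0)
    (hd : ∀ y, HasDerivAt h (h' y) y) (hc' : Continuous h')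
    (hI1 : IntegrableOn (fun y => V y ^ p * h y ^ 2) (Ioi (0:ℝ)))
    (hI2 : IntegrableOn (fun y => V y ^ q * h' y ^ 2) (Ioi (0:ℝ)))
    (hs : ∀ ε, 0 < ε → ∃ y, x ≤ y ∧ |h y| ≤ ε) :
    |h x| * V x ^ ((p + q) / 4) ≤
      (∫ y in Ioi (0:ℝ), V y ^ p * h y ^ 2) ^ (1/2:ℝ)
      + (∫ y in Ioi (0:ℝ), V y ^ q * h' y ^ 2) ^ (1/2:ℝ) := by
  have hupos : 0 < V x := hVpos x
  set u := V x with hu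
  set r := (p + q) / 2 with hrdef
  set w : ℝ → ℝ := fun y => V y ^ p * h y ^ 2 + V y ^ q * h' y ^ 2 with hw
  have hwnn : ∀ y, 0 ≤ w y := fun y => add_nonneg
    (mul_nonneg (Real.rpow_nonneg (hVpos _).le _) (sq_nonneg _))
    (mul_nonneg (Real.rpow_nonneg (hVpos _).le _) (sq_nonneg _))
  have hwInt0 : IntegrableOn w (Ioi (0:ℝ)) := hI1.add hI2
  have hwInt : IntegrableOn w (Ioi x) := hwInt0.mono_set (Ioi_subset_Ioi hx)
  have hurpos : (0:ℝ) < u ^ r := Real.rpow_pos_of_pos hupos _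
  have hptw : ∀ y, x ≤ y → |2 * h y * h' y| ≤ (u ^ r)⁻¹ * w y := by
    intro y hxy
    have hvpos : 0 < V y := hVpos y
    have hvu : V y ≤ u := hVanti hxy
    have h1 : u ^ r ≤ V y ^ r :=
      Real.rpow_le_rpow_of_nonpos hvpos hvu (by rw [hrdef]; linarith)
    have e1 : V y ^ r = V y ^ (p/2) * V y ^ (q/2) := by
      rw [← Real.rpow_add hvpos, hrdef]; ring_nf
    have e2 : (V y ^ (p/2) * |h y|) ^ 2 = V y ^ p * h y ^ 2 := by
      rw [mul_pow, ← Real.rpow_natCast (V y ^ (p/2)) 2, ← Real.rpow_mul hvpos.le, sq_abs]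
      norm_num
    have e3 : (V y ^ (q/2) * |h' y|) ^ 2 = V y ^ q * h' y ^ 2 := by
      rw [mul_pow, ← Real.rpow_natCast (V y ^ (q/2)) 2, ← Real.rpow_mul hvpos.le, sq_abs]
      norm_num
    have h4 := two_mul_le_add_sq (V y ^ (p/2) * |h y|) (V y ^ (q/2) * |h' y|)
    have h2 : V y ^ r * |2 * h y * h' y| ≤ w y := by
      calc V y ^ r * |2 * h y * h' y|
          = 2 * (V y ^ (p/2) * |h y|) * (V y ^ (q/2) * |h' y|) := by
            rw [abs_mul, abs_mul, abs_two, e1]; ring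
        _ ≤ (V y ^ (p/2) * |h y|) ^ 2 + (V y ^ (q/2) * |h' y|) ^ 2 := h4
        _ = w y := by rw [e2, e3]
    have h5 : u ^ r * |2 * h y * h' y| ≤ w y :=
      le_trans (mul_le_mul_of_nonneg_right h1 (abs_nonneg _)) h2
    calc |2 * h y * h' y| = (u ^ r)⁻¹ * (u ^ r * |2 * h y * h' y|) := by
          field_simp
      _ ≤ (u ^ r)⁻¹ * w y :=
          mul_le_mul_of_nonneg_left h5 (inv_nonneg.mpr hurpos.le)
  have hkey : h x ^ 2 ≤ ∫ y in Ioi x, (u ^ r)⁻¹ * w y := by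
    refine auxSqLe h h' (fun y => (u ^ r)⁻¹ * w y) x hd hc' (hwInt.const_mul _)
      (fun y => mul_nonneg (inv_nonneg.mpr hurpos.le) (hwnn y)) hptw hs
  set I1 := ∫ y in Ioi (0:ℝ), V y ^ p * h y ^ 2 with hI1def
  set I2 := ∫ y in Ioi (0:ℝ), V y ^ q * h' y ^ 2 with hI2def
  have hI1nn : 0 ≤ I1 := setIntegral_nonneg measurableSet_Ioi
    (fun y _ => mul_nonneg (Real.rpow_nonneg (hVpos _).le _) (sq_nonneg _))
  have hI2nn : 0 ≤ I2 := setIntegral_nonneg measurableSet_Ioi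
    (fun y _ => mul_nonneg (Real.rpow_nonneg (hVpos _).le _) (sq_nonneg _))
  have hwval : (∫ y in Ioi (0:ℝ), w y) = I1 + I2 := integral_add hI1 hI2
  have hmono : (∫ y in Ioi x, w y) ≤ ∫ y in Ioi (0:ℝ), w y :=
    setIntegral_mono_set hwInt0 (ae_of_all _ hwnn)
      (HasSubset.Subset.eventuallyLE (Ioi_subset_Ioi hx))
  have hkey2 : h x ^ 2 * u ^ r ≤ I1 + I2 := by
    have hc1 : (∫ y in Ioi x, (u ^ r)⁻¹ * w y) = (u ^ r)⁻¹ * ∫ y in Ioi x, w y :=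
      MeasureTheory.integral_const_mul _ _
    have : h x ^ 2 ≤ (u ^ r)⁻¹ * (I1 + I2) := by
      rw [hc1] at hkey
      refine le_trans hkey (mul_le_mul_of_nonneg_left ?_ (inv_nonneg.mpr hurpos.le))
      rw [← hwval]; exact hmono
    calc h x ^ 2 * u ^ r ≤ ((u ^ r)⁻¹ * (I1 + I2)) * u ^ r :=
          mul_le_mul_of_nonneg_right this hurpos.le
      _ = I1 + I2 := by field_simp
  have eu : (u ^ ((p + q)/4)) ^ 2 = u ^ r := by
    rw [← Real.rpow_natCast (u ^ ((p+q)/4)) 2, ← Real.rpow_mul hupos.le, hrdef]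
    ring_nf
  have hlhs : Real.sqrt (h x ^ 2 * u ^ r) = |h x| * u ^ ((p + q)/4) := by
    rw [← eu, ← mul_pow, Real.sqrt_sq_eq_abs, abs_mul]
    congr 1
    exact abs_of_nonneg (Real.rpow_nonneg hupos.le _)
  rw [← hlhs]
  calc Real.sqrt (h x ^ 2 * u ^ r) ≤ Real.sqrt (I1 + I2) := Real.sqrt_le_sqrt hkey2
    _ ≤ Real.sqrt I1 + Real.sqrt I2 := auxSqrtAddLe _ _ hI1nn hI2nn
    _ = I1 ^ (1/2:ℝ) + I2 ^ (1/2:ℝ) := by rw [Real.sqrt_eq_rpow, Real.sqrt_eq_rpow]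


/-- Weighted sup-norm bounds via Sobolev embedding. -/
theorem weighted_sup_bounds
    (m um s β d₀ : ℝ) (f U : ℝ → ℝ)
    (hm1 : 1/2 < m) (hm2 : m < 1)
    (hf : ContDiff ℝ (⊤ : ℕ∞) f) (hconv : ConvexOn ℝ Set.univ f) (hf0 : f 0 = 0)
    (hum : 0 < um) (hRH : s = f um / um) (hspos : 0 < s)
    (hlax1 : deriv f 0 < s) (hlax2 : s < deriv f um)
    (hU : IsShockProfile m um s f U)
    (hβ1 : 0 < β) (hβ2 : β ≤ (3 * m - 1) / (1 - m))
    (hd₀ : 0 < d₀) :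
    ∃ C > (0:ℝ), ∀ (T : ℝ) (φ : ℝ → ℝ → ℝ) (d : ℝ → ℝ),
      0 < T → Reformulated m um s d₀ T f U φ d → MemX m s β d₀ T U φ d →
      ∀ t ∈ Icc (0:ℝ) T, ∀ x, 0 ≤ x →
        |φ x t| * U (x - s * t - d t) ^ (-m) ≤ C * Nsup m s β d₀ U φ d T ∧
        |dxn 1 φ x t| * U (x - s * t - d t) ^ (-1 : ℝ) ≤ C * Nsup m s β d₀ U φ d T := by
  obtain ⟨hUsm, hUrange, hUode, _htb, _htt⟩ := hU
  have hUpos : ∀ z, 0 < U z := fun z => (hUrange z).1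
  have hum_ne : um ≠ 0 := ne_of_gt hum
  have hfum : f um = s * um := by rw [hRH]; field_simp
  have hfl : ∀ z, f (U z) ≤ s * U z := by
    intro z
    obtain ⟨h0, h1⟩ := hUrange z
    have hb0 : (0:ℝ) ≤ 1 - U z / um := by
      have : U z / um ≤ 1 := (div_le_one hum).mpr h1.le
      linarith
    have hb1 : (0:ℝ) ≤ U z / um := by positivity
    have key := hconv.2 (Set.mem_univ (0:ℝ)) (Set.mem_univ um) hb0 hb1 (by ring)
    simp only [smul_eq_mul, mul_zero, zero_add, hf0] at key
    rw [div_mul_cancel₀ _ hum_ne] at key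
    calc f (U z) ≤ U z / um * f um := key
      _ = s * U z := by rw [hfum]; field_simp
  have hUanti : Antitone U := by
    refine antitone_of_deriv_nonpos (hUsm.differentiable (by simp)) fun z => ?_
    rw [hUode z]
    exact mul_nonpos_iff.mpr (Or.inl ⟨Real.rpow_nonneg (hUpos z).le _, by linarith [hfl z]⟩)
  refine ⟨1, one_pos, ?_⟩
  intro T φ d hT hRef hX t ht x hx
  obtain ⟨hBdd, hIntAll, _, _⟩ := hX
  obtain ⟨hI1, hI2, hI3, hI4⟩ := hIntAll t ht
  have hψ : ContDiff ℝ (⊤:ℕ∞) (fun y : ℝ => φ y t) :=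
    hRef.φ_smooth.comp (contDiff_id.prodMk contDiff_const)
  have e1 : ∀ y, dxn 1 φ y t = deriv (fun y => φ y t) y := fun y => by
    simp [dxn, iteratedDeriv_one]
  have hψ' : ContDiff ℝ (⊤:ℕ∞) (deriv (fun y : ℝ => φ y t)) :=
    (contDiff_infty_iff_deriv.mp hψ).2
  have hd1 : ∀ y, HasDerivAt (fun y => φ y t) (dxn 1 φ y t) y := fun y => by
    rw [e1 y]; exact ((hψ.differentiable (by simp)) y).hasDerivAt
  have hc1 : Continuous (fun y => dxn 1 φ y t) := by
    simp only [e1]; exact hψ'.continuous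
  have e2 : ∀ y, dxn 2 φ y t = deriv (deriv (fun y => φ y t)) y := fun y => by
    show iteratedDeriv 2 (fun y => φ y t) y = _
    rw [show (2:ℕ) = 1 + 1 from rfl, iteratedDeriv_succ, iteratedDeriv_one]
  have hd2 : ∀ y, HasDerivAt (fun y => dxn 1 φ y t) (dxn 2 φ y t) y := fun y => by
    rw [e2 y, show (fun y => dxn 1 φ y t) = deriv (fun y => φ y t) from funext e1]
    exact ((hψ'.differentiable (by simp)) y).hasDerivAt
  have hc2 : Continuous fun y => dxn 2 φ y t := by
    simp only [e2]
    exact (contDiff_infty_iff_deriv.mp hψ').2.continuous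
  have hs1 : ∀ ε, 0 < ε → ∃ y, x ≤ y ∧ |φ y t| ≤ ε := by
    intro ε hε
    obtain ⟨N, hN⟩ := (Metric.tendsto_atTop.mp (hRef.decay t)) ε hε
    refine ⟨max N x, le_max_right _ _, ?_⟩
    have := hN (max N x) (le_max_left _ _)
    rw [Real.dist_eq, sub_zero] at this
    exact this.le
  have hjb1 : ∀ z : ℝ, (1:ℝ) ≤ jb z := fun z => by
    rw [show (1:ℝ) = Real.sqrt 1 from Real.sqrt_one.symm]
    exact Real.sqrt_le_sqrt (by nlinarith)
  have hjbnn : ∀ z : ℝ, (0:ℝ) ≤ jb z := fun z => le_trans zero_le_one (hjb1 z)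
  have hsq1 : IntegrableOn (fun y => (dxn 1 φ y t) ^ 2) (Ioi (0:ℝ)) := by
    have hj := hI4 1 (by norm_num)
    refine Integrable.mono hj (hc1.pow 2).aestronglyMeasurable (ae_of_all _ fun y => ?_)
    simp only [Real.norm_eq_abs]
    rw [abs_of_nonneg (sq_nonneg _), abs_of_nonneg (mul_nonneg
      (Real.rpow_nonneg (hjbnn _) _) (sq_nonneg _))]
    exact le_mul_of_one_le_left (sq_nonneg _)
      (Real.one_le_rpow (hjb1 _) (by push_cast; linarith))
  have hs2 : ∀ ε, 0 < ε → ∃ y, x ≤ y ∧ |dxn 1 φ y t| ≤ ε := fun ε hε =>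
    auxFreqSmall _ hc1 hsq1 ε hε x
  have hVanti : Antitone (fun y => U (y - s * t - d t)) := fun a b hab => by
    show U (b - s * t - d t) ≤ U (a - s * t - d t)
    exact hUanti (by linarith)
  -- first estimate
  have hest1 : |φ x t| * U (x - s * t - d t) ^ ((1 - 3 * m + -(1 + m))/4) ≤
      (∫ y in Ioi (0:ℝ), U (y - s * t - d t) ^ (1 - 3 * m) * φ y t ^ 2) ^ (1/2:ℝ)
      + (∫ y in Ioi (0:ℝ), U (y - s * t - d t) ^ (-(1 + m)) * dxn 1 φ y t ^ 2) ^ (1/2:ℝ) :=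
    auxMain (V := fun y => U (y - s * t - d t)) (fun z => hUpos _) hVanti
      _ _ x _ _ hx (by linarith) hd1 hc1 hI1 hI2 hs1
  have hest2 : |dxn 1 φ x t| * U (x - s * t - d t) ^ ((-(1 + m) + (m - 3))/4) ≤
      (∫ y in Ioi (0:ℝ), U (y - s * t - d t) ^ (-(1 + m)) * dxn 1 φ y t ^ 2) ^ (1/2:ℝ)
      + (∫ y in Ioi (0:ℝ), U (y - s * t - d t) ^ (m - 3) * dxn 2 φ y t ^ 2) ^ (1/2:ℝ) :=
    auxMain (V := fun y => U (y - s * t - d t)) (fun z => hUpos _) hVanti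
      _ _ x _ _ hx (by linarith) hd2 hc2 hI2 hI3 hs2
  rw [show (1 - 3 * m + -(1 + m))/4 = -m by ring] at hest1
  rw [show (-(1 + m) + (m - 3))/4 = (-1:ℝ) by ring] at hest2
  -- nonnegativity of Nfun terms
  have hT1nn : (0:ℝ) ≤ (∫ x in Ioi (0:ℝ),
      U (x - s * t - d t) ^ (1 - 3 * m) * φ x t ^ 2) ^ (1/2:ℝ) :=
    Real.rpow_nonneg (setIntegral_nonneg measurableSet_Ioi fun y _ =>
      mul_nonneg (Real.rpow_nonneg (hUpos _).le _) (sq_nonneg _)) _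
  have hT2nn : (0:ℝ) ≤ (∫ x in Ioi (0:ℝ),
      U (x - s * t - d t) ^ (-(1 + m)) * dxn 1 φ x t ^ 2) ^ (1/2:ℝ) :=
    Real.rpow_nonneg (setIntegral_nonneg measurableSet_Ioi fun y _ =>
      mul_nonneg (Real.rpow_nonneg (hUpos _).le _) (sq_nonneg _)) _
  have hT3nn : (0:ℝ) ≤ (∫ x in Ioi (0:ℝ),
      U (x - s * t - d t) ^ (m - 3) * dxn 2 φ x t ^ 2) ^ (1/2:ℝ) :=
    Real.rpow_nonneg (setIntegral_nonneg measurableSet_Ioi fun y _ =>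
      mul_nonneg (Real.rpow_nonneg (hUpos _).le _) (sq_nonneg _)) _
  have hT4nn : (0:ℝ) ≤ (∑ j ∈ Finset.range 4, ∫ x in Ioi (0:ℝ),
      jb (x - s * t - d t) ^ (β + (j : ℝ)) * (dxn j φ x t) ^ 2) ^ (1/2:ℝ) :=
    Real.rpow_nonneg (Finset.sum_nonneg fun j _ =>
      setIntegral_nonneg measurableSet_Ioi fun y _ =>
        mul_nonneg (Real.rpow_nonneg (hjbnn _) _) (sq_nonneg _)) _
  have hT5nn : (0:ℝ) ≤ (d₀ + t) ^ ((β + 3) / 2) * |dxn 2 φ 0 t| :=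
    mul_nonneg (Real.rpow_nonneg (by linarith [ht.1]) _) (abs_nonneg _)
  have hT6nn : (0:ℝ) ≤ (∫ τ in Set.Ioc (0:ℝ) t,
      (d₀ + τ) ^ (β + 3) * (dxn 2 φ 0 τ) ^ 2) ^ (1/2:ℝ) :=
    Real.rpow_nonneg (setIntegral_nonneg measurableSet_Ioc fun τ hτ =>
      mul_nonneg (Real.rpow_nonneg (by linarith [hτ.1]) _) (sq_nonneg _)) _
  have hNt : Nfun m s β d₀ U φ d t ≤ Nsup m s β d₀ U φ d T :=
    le_csSup hBdd ⟨t, ht, rfl⟩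
  rw [one_mul]
  constructor
  · refine le_trans hest1 (le_trans ?_ hNt)
    unfold Nfun
    linarith
  · refine le_trans hest2 (le_trans ?_ hNt)
    unfold Nfun
    linarith

end
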